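/- arXiv:2303.04733 — 3 statements merged into one kernel-verified Lean document; each statement's English description precedes it below -/
import Mathlib

section
/- Let f(x) = Σ_α c_α x^α be a homogeneous polynomial in n variables with real coefficients such that its normalization N(f) (obtained by replacing each monomial x^α by x^α/α!) is Lorentzian. Then for every exponent vector α ∈ ℕ^n and every pair of indices i, j ∈ [n], the inequality c_α² ≥ c_{α+e_i−e_j} · c_{α−e_i+e_j} holds. -/
/-!
Write `a_μ(g) = μ! · [x^μ] g`, the constant term of `∂^μ g`, so that `a_μ(N f) = [x^μ] f`.
Differentiating in `x_k` shifts `a` by `e_k` and keeps the Lorentzian property, so the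
inequality `a_{β+2eᵢ} a_{β+2eⱼ} ≤ a_{β+eᵢ+eⱼ}²` reduces along `β` to the quadratic case `β = 0`,
where the three numbers are the Hessian entries `Hᵢᵢ`, `Hⱼⱼ`, `Hᵢⱼ`. A symmetric matrix with at
most one positive eigenvalue has a nonzero vector in the plane of `eᵢ, eⱼ` on which its quadratic
form is nonpositive; with `Hᵢᵢ, Hⱼⱼ ≥ 0` this forces `Hᵢᵢ Hⱼⱼ ≤ Hᵢⱼ²`.
-/

open MvPolynomial

/-- M-convexity of a set of exponent vectors. -/
def MConvex {σ : Type*} (J : Set (σ →₀ ℕ)) : Prop :=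
  ∀ α ∈ J, ∀ β ∈ J, ∀ i : σ, β i < α i →
    ∃ j : σ, α j < β j ∧ (α - Finsupp.single i 1 + Finsupp.single j 1) ∈ J ∧
      (β - Finsupp.single j 1 + Finsupp.single i 1) ∈ J

/-- Hessian matrix of a polynomial (entries are constant terms of second derivatives). -/
noncomputable def hessMv {n : ℕ} (f : MvPolynomial (Fin n) ℝ) : Matrix (Fin n) (Fin n) ℝ :=
  fun i j => (MvPolynomial.pderiv i (MvPolynomial.pderiv j f)).coeff 0

/-- A real symmetric matrix has at most one positive eigenvalue. -/
def AtMostOnePosEig {n : ℕ} (H : Matrix (Fin n) (Fin n) ℝ) : Prop :=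
  ∃ hH : H.IsHermitian, (Finset.univ.filter fun i => 0 < hH.eigenvalues i).card ≤ 1

/-- Lorentzian polynomials of degree `d` in `n` variables (Brändén–Huh). -/
def Lorentzian {n : ℕ} : ℕ → MvPolynomial (Fin n) ℝ → Prop
  | 0, f => f.IsHomogeneous 0 ∧ ∀ m, 0 ≤ f.coeff m
  | 1, f => f.IsHomogeneous 1 ∧ ∀ m, 0 ≤ f.coeff m
  | 2, f => f.IsHomogeneous 2 ∧ (∀ m, 0 ≤ f.coeff m) ∧ MConvex ((f.support : Finset (Fin n →₀ ℕ)) : Set (Fin n →₀ ℕ)) ∧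
      AtMostOnePosEig (hessMv f)
  | (d+3), f => f.IsHomogeneous (d+3) ∧ (∀ m, 0 ≤ f.coeff m) ∧ MConvex ((f.support : Finset (Fin n →₀ ℕ)) : Set (Fin n →₀ ℕ)) ∧
      ∀ i, Lorentzian (d+2) (MvPolynomial.pderiv i f)

/-- The normalization operator `N(x^α) = x^α/α!`. -/
noncomputable def normalizeMv {n : ℕ} (f : MvPolynomial (Fin n) ℝ) : MvPolynomial (Fin n) ℝ :=
  ∑ α ∈ f.support, MvPolynomial.monomial α (f.coeff α / (α.prod fun _ m => (Nat.factorial m : ℝ)))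

open Finsupp (single)

section
variable {σ : Type*}

noncomputable def multiFactorial (μ : σ →₀ ℕ) : ℝ :=
  μ.prod fun _ m => (m.factorial : ℝ)

lemma multiFactorial_pos (μ : σ →₀ ℕ) : 0 < multiFactorial μ :=
  Finset.prod_pos fun k _ => Nat.cast_pos.mpr (μ k).factorial_pos

@[simp]
lemma multiFactorial_zero : multiFactorial (0 : σ →₀ ℕ) = 1 :=
  Finsupp.prod_zero_index

lemma multiFactorial_add_single [DecidableEq σ] (μ : σ →₀ ℕ) (k : σ) :
    multiFactorial (μ + single k 1) = (μ k + 1) * multiFactorial μ := by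
  have h0 : ∀ l : σ, ((0 : ℕ).factorial : ℝ) = 1 := fun _ => by simp
  rw [multiFactorial, multiFactorial, ← Finsupp.mul_prod_erase' _ k _ h0,
    ← Finsupp.mul_prod_erase' μ k _ h0, Finsupp.erase_add, Finsupp.erase_single, add_zero]
  simp only [Finsupp.coe_add, Pi.add_apply, Finsupp.single_eq_same, Nat.factorial_succ,
    Nat.cast_mul, Nat.cast_add, Nat.cast_one]
  ring

noncomputable def scaledCoeff (g : MvPolynomial σ ℝ) (μ : σ →₀ ℕ) : ℝ :=
  multiFactorial μ * g.coeff μ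

lemma scaledCoeff_pderiv [DecidableEq σ] (g : MvPolynomial σ ℝ) (k : σ) (μ : σ →₀ ℕ) :
    scaledCoeff (pderiv k g) μ = scaledCoeff g (μ + single k 1) := by
  rw [scaledCoeff, scaledCoeff, coeff_pderiv, multiFactorial_add_single]
  ring

end

lemma coeff_normalizeMv {n : ℕ} (f : MvPolynomial (Fin n) ℝ) (μ : Fin n →₀ ℕ) :
    (normalizeMv f).coeff μ = f.coeff μ / multiFactorial μ := by
  classical
  rw [normalizeMv, coeff_sum]
  simp only [coeff_monomial, Finset.sum_ite_eq', mem_support_iff, ite_not]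
  split_ifs with h <;> simp [h, multiFactorial]

lemma scaledCoeff_normalizeMv {n : ℕ} (f : MvPolynomial (Fin n) ℝ) (μ : Fin n →₀ ℕ) :
    scaledCoeff (normalizeMv f) μ = f.coeff μ := by
  rw [scaledCoeff, coeff_normalizeMv, mul_div_cancel₀ _ (multiFactorial_pos μ).ne']

lemma hessMv_eq_scaledCoeff {n : ℕ} (g : MvPolynomial (Fin n) ℝ) (i j : Fin n) :
    hessMv g i j = scaledCoeff g (single i 1 + single j 1) := by
  rw [hessMv, ← one_mul (coeff 0 _), ← multiFactorial_zero, ← scaledCoeff, scaledCoeff_pderiv,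
    scaledCoeff_pderiv, zero_add]

lemma mul_le_sq_of_quadratic_nonpos {R : Type*} [Field R] [LinearOrder R] [IsStrictOrderedRing R]
    {p q r a b : R} (hp : 0 ≤ p) (hr : 0 ≤ r)
    (hab : a ≠ 0 ∨ b ≠ 0) (h : a ^ 2 * p + 2 * a * b * q + b ^ 2 * r ≤ 0) : p * r ≤ q ^ 2 := by
  by_contra! hlt
  have hp' : 0 < p := lt_of_le_of_ne hp (by rintro rfl; nlinarith [sq_nonneg q])
  rcases hab with ha | hb
  · by_cases hb : b = 0
    · subst hb; nlinarith [sq_pos_of_ne_zero ha]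
    · nlinarith [sq_pos_of_ne_zero hb, sq_nonneg (a * p + b * q)]
  · nlinarith [sq_pos_of_ne_zero hb, sq_nonneg (a * p + b * q)]

lemma exists_ne_zero_mul_add_mul_eq_zero {R : Type*} [CommRing R] [Nontrivial R] (p q : R) :
    ∃ a b : R, (a ≠ 0 ∨ b ≠ 0) ∧ a * p + b * q = 0 := by
  by_cases hp : p = 0
  · exact ⟨1, 0, Or.inl one_ne_zero, by simp [hp]⟩
  · exact ⟨q, -p, Or.inr (neg_ne_zero.mpr hp), by ring⟩

namespace Matrix.IsHermitian

variable {ι : Type*} [Fintype ι] [DecidableEq ι] {H : Matrix ι ι ℝ}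

lemma dotProduct_mulVec_eq_sum_eigenvalues (hH : H.IsHermitian) (x : ι → ℝ) :
    x ⬝ᵥ H *ᵥ x =
      ∑ k, hH.eigenvalues k * (star (↑hH.eigenvectorUnitary : Matrix ι ι ℝ) *ᵥ x) k ^ 2 := by
  conv_lhs => rw [hH.spectral_theorem, Unitary.conjStarAlgAut_apply]
  rw [← mulVec_mulVec, ← mulVec_mulVec, dotProduct_mulVec,
    ← mulVec_transpose, star_eq_conjTranspose, conjTranspose_eq_transpose_of_trivial]
  simp only [dotProduct, mulVec_diagonal, Function.comp_apply, RCLike.ofReal_real_eq_id, id]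
  exact Finset.sum_congr rfl fun k _ => by ring

lemma dotProduct_mulVec_single_add_single (hH : H.IsHermitian) (i j : ι) (a b : ℝ) :
    (a • Pi.single i 1 + b • Pi.single j 1) ⬝ᵥ H *ᵥ (a • Pi.single i 1 + b • Pi.single j 1) =
      a ^ 2 * H i i + 2 * a * b * H i j + b ^ 2 * H j j := by
  have hsym : H j i = H i j := by simpa using (hH.apply j i).symm
  simp only [mulVec_add, mulVec_smul, dotProduct_add, dotProduct_smul, add_dotProduct,
    smul_dotProduct, mulVec_single, single_dotProduct, smul_eq_mul, col_apply,
    MulOpposite.op_one, one_smul, one_mul, hsym]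
  ring

end Matrix.IsHermitian

section

open Matrix

namespace AtMostOnePosEig

variable {n : ℕ} {H : Matrix (Fin n) (Fin n) ℝ}

lemma exists_dotProduct_mulVec_nonpos (h : AtMostOnePosEig H) (u v : Fin n → ℝ) :
    ∃ a b : ℝ, (a ≠ 0 ∨ b ≠ 0) ∧ (a • u + b • v) ⬝ᵥ H *ᵥ (a • u + b • v) ≤ 0 := by
  obtain ⟨hH, hcard⟩ := h
  set w : (Fin n → ℝ) → Fin n → ℝ :=
    (star (↑hH.eigenvectorUnitary : Matrix (Fin n) (Fin n) ℝ) *ᵥ ·)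
  -- `a • u + b • v` is to have no component along an eigenvector with positive eigenvalue.
  obtain ⟨a, b, hab, hkill⟩ : ∃ a b : ℝ, (a ≠ 0 ∨ b ≠ 0) ∧
      ∀ k, 0 < hH.eigenvalues k → a * w u k + b * w v k = 0 := by
    rcases (Finset.univ.filter fun k => 0 < hH.eigenvalues k).eq_empty_or_nonempty with
      hnone | ⟨k₀, hk₀⟩
    · refine ⟨1, 0, Or.inl one_ne_zero, fun k hk => ?_⟩
      exact absurd (Finset.filter_eq_empty_iff.mp hnone (Finset.mem_univ k)) (not_not.mpr hk)
    · obtain ⟨a, b, hab, h⟩ := exists_ne_zero_mul_add_mul_eq_zero (w u k₀) (w v k₀)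
      refine ⟨a, b, hab, fun k hk => ?_⟩
      rwa [Finset.card_le_one.mp hcard k (by simpa using hk) k₀ hk₀]
  refine ⟨a, b, hab, ?_⟩
  rw [hH.dotProduct_mulVec_eq_sum_eigenvalues]
  refine Finset.sum_nonpos fun k _ => ?_
  rcases lt_or_ge 0 (hH.eigenvalues k) with hk | hk
  · have hw : w (a • u + b • v) k = 0 := by
      simpa only [w, mulVec_add, mulVec_smul, Pi.add_apply, Pi.smul_apply, smul_eq_mul] using
        hkill k hk
    simp only [w] at hw
    simp [hw]
  · exact mul_nonpos_of_nonpos_of_nonneg hk (sq_nonneg _)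

lemma mul_le_sq (h : AtMostOnePosEig H) {i j : Fin n} (hii : 0 ≤ H i i) (hjj : 0 ≤ H j j) :
    H i i * H j j ≤ H i j ^ 2 := by
  obtain ⟨a, b, hab, hle⟩ := h.exists_dotProduct_mulVec_nonpos (Pi.single i 1) (Pi.single j 1)
  rw [h.1.dotProduct_mulVec_single_add_single] at hle
  exact mul_le_sq_of_quadratic_nonpos hii hjj hab hle

end AtMostOnePosEig

end

namespace Lorentzian

variable {n : ℕ}

lemma isHomogeneous {d : ℕ} {g : MvPolynomial (Fin n) ℝ} (hg : Lorentzian d g) :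
    g.IsHomogeneous d := by
  rcases d with _ | _ | _ | d <;> exact hg.1

lemma coeff_nonneg {d : ℕ} {g : MvPolynomial (Fin n) ℝ} (hg : Lorentzian d g)
    (μ : Fin n →₀ ℕ) : 0 ≤ g.coeff μ := by
  rcases d with _ | _ | _ | d
  exacts [hg.2 μ, hg.2 μ, hg.2.1 μ, hg.2.1 μ]

lemma scaledCoeff_mul_le_sq {d : ℕ} {g : MvPolynomial (Fin n) ℝ} (hg : Lorentzian d g)
    (β : Fin n →₀ ℕ) (i j : Fin n) :
    scaledCoeff g (β + single i 1 + single i 1) * scaledCoeff g (β + single j 1 + single j 1) ≤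
      scaledCoeff g (β + single i 1 + single j 1) ^ 2 := by
  induction d using Nat.strong_induction_on generalizing g β with
  | _ d ih =>
  by_cases hdeg : β.degree + 2 = d
  swap
  · have hzero : ∀ k l : Fin n, g.coeff (β + single k 1 + single l 1) = 0 := fun k l =>
      hg.isHomogeneous.coeff_eq_zero (by simpa [add_assoc] using hdeg)
    simp [scaledCoeff, hzero]
  match d, hg with
  | 0, _ | 1, _ => omega
  | 2, hg =>
    obtain rfl : β = 0 := Finsupp.degree_eq_zero_iff β |>.mp (by omega)
    have hnonneg : ∀ k : Fin n, 0 ≤ hessMv g k k := fun k => by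
      rw [hessMv_eq_scaledCoeff]
      exact mul_nonneg (multiFactorial_pos _).le (hg.coeff_nonneg _)
    simpa only [zero_add, ← hessMv_eq_scaledCoeff] using
      hg.2.2.2.mul_le_sq (hnonneg i) (hnonneg j)
  | e + 3, hg =>
    obtain ⟨k, hk⟩ : ∃ k, k ∈ β.support :=
      Finsupp.support_nonempty_iff.mpr (by rintro rfl; simp at hdeg)
    obtain ⟨β', rfl⟩ : ∃ β', β = β' + single k 1 :=
      ⟨β - single k 1, (tsub_add_cancel_of_le (Finsupp.single_le_iff.mpr
        (Nat.one_le_iff_ne_zero.mpr (Finsupp.mem_support_iff.mp hk)))).symm⟩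
    have := ih (e + 2) (by omega) (hg.2.2.2 k) β'
    simpa only [scaledCoeff_pderiv, add_right_comm _ (single k 1)] using this

end Lorentzian

lemma exists_eq_add_single_add_single {n : ℕ} {α : Fin n →₀ ℕ} {i j : Fin n} (hij : i ≠ j)
    (hi : 0 < α i) (hj : 0 < α j) : ∃ β, α = β + single i 1 + single j 1 := by
  have hj' : single j 1 ≤ α := Finsupp.single_le_iff.mpr hj
  have hi' : single i 1 ≤ α - single j 1 := Finsupp.single_le_iff.mpr (by simp [hij]; exact hi)
  exact ⟨α - single j 1 - single i 1, by rw [tsub_add_cancel_of_le hi', tsub_add_cancel_of_le hj']⟩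

theorem stmt0_general {n d : ℕ} (f : MvPolynomial (Fin n) ℝ)
    (hL : Lorentzian d (normalizeMv f)) (α : Fin n →₀ ℕ) (i j : Fin n) :
    (if 0 < α j then f.coeff (α - Finsupp.single j 1 + Finsupp.single i 1) else 0) *
      (if 0 < α i then f.coeff (α - Finsupp.single i 1 + Finsupp.single j 1) else 0)
      ≤ f.coeff α ^ 2 := by
  split_ifs with hj hi
  · rcases eq_or_ne i j with rfl | hij
    · rw [tsub_add_cancel_of_le (Finsupp.single_le_iff.mpr hi), sq]
    obtain ⟨β, rfl⟩ := exists_eq_add_single_add_single hij hi hj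
    have hswap : β + single i 1 + single j 1 - single i 1 = β + single j 1 := by
      rw [add_right_comm, add_tsub_cancel_right]
    rw [add_tsub_cancel_right, hswap]
    simpa only [scaledCoeff_normalizeMv] using hL.scaledCoeff_mul_le_sq β i j
  all_goals simpa using sq_nonneg (f.coeff α)

/-- Proposition 4.4 of Brändén–Huh: if `N(f)` is Lorentzian then the
coefficients of `f` satisfy `c_α² ≥ c_{α+eᵢ-eⱼ} c_{α-eᵢ+eⱼ}` (with the
convention that the coefficient is `0` when the exponent has a negative entry). -/
theorem stmt0 {n d : ℕ} (f : MvPolynomial (Fin n) ℝ) (hf : f.IsHomogeneous d)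
    (hL : Lorentzian d (normalizeMv f)) (α : Fin n →₀ ℕ) (i j : Fin n) :
    (if 0 < α j then f.coeff (α - Finsupp.single j 1 + Finsupp.single i 1) else 0) *
      (if 0 < α i then f.coeff (α - Finsupp.single i 1 + Finsupp.single j 1) else 0)
      ≤ f.coeff α ^ 2 :=
  stmt0_general f hL α i j
end

section
/- Let J ⊆ ℕ^n be an M-convex set. Then the polynomial f_J = Σ_{α ∈ J} x^α/α! is Lorentzian. -/
open MvPolynomial

/-!
Induction on the degree. The support of `f_J = normalizedGenPoly J` is `J`, and
`∂_i f_J = f_{J_i}` with `J_i = {β | β + e_i ∈ J}`, which is again M-convex; so only the Hessian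
condition in degree two needs an argument. There M-convexity forces the pairs `{i, j}` with
`e_i + e_j ∈ J` to form a complete multipartite graph on the variables `V` occurring in `J`, with a
loop at each `i` such that `2 e_i ∈ J` (such an `i` is joined to all of `V`). Hence the Hessian
quadratic form is `(∑_{i ∈ V} x_i)² - ∑_P (∑_{i ∈ P} x_i)²`, the sum running over the parts `P`
(the classes of the partial equivalence relation `Unpaired J`), and it is nonpositive on the
hyperplane `∑_{i ∈ V} x_i = 0`. A symmetric matrix whose form is nonpositive on a hyperplane has
at most one positive eigenvalue.
-/

open MvPolynomial Finsupp
open scoped Matrix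

section ExponentSets

variable {σ : Type*}

theorem MConvex.preimage_add_single {J : Set (σ →₀ ℕ)} (hJ : MConvex J) (i : σ) :
    MConvex ((· + single i 1) ⁻¹' J) := by
  intro α hα β hβ k hk
  obtain ⟨l, hl, hαl, hβl⟩ := hJ _ hα _ hβ k (by simpa using hk)
  replace hl : α l < β l := by simpa using hl
  have shift {γ : σ →₀ ℕ} {a b : σ} (h : 1 ≤ γ a) :
      γ - single a 1 + single b 1 + single i 1 = γ + single i 1 - single a 1 + single b 1 := by
    rw [add_right_comm, tsub_add_eq_add_tsub (single_le_iff.mpr h)]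
  refine ⟨l, hl, ?_, ?_⟩
  · simpa only [Set.mem_preimage, shift (show 1 ≤ α k by omega)] using hαl
  · simpa only [Set.mem_preimage, shift (show 1 ≤ β l by omega)] using hβl

theorem eq_single_add_single_of_degree_eq_two {β : σ →₀ ℕ} (hβ : β.degree = 2) {i j : σ}
    (hij : i ≠ j) (hi : β i ≠ 0) (hj : β j ≠ 0) : β = single i 1 + single j 1 := by
  classical
  have hle : single i 1 + single j 1 ≤ β := fun l => by
    simp only [Finsupp.coe_add, Pi.add_apply, single_apply]
    split_ifs <;> grind
  obtain ⟨γ, rfl⟩ := exists_add_of_le hle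
  have hγ : γ.degree = 0 := by
    rw [map_add, map_add, degree_single, degree_single] at hβ
    omega
  rw [(degree_eq_zero_iff γ).mp hγ, add_zero]

theorem MConvex.single_add_single_mem_or {J : Set (σ →₀ ℕ)} (hJ : MConvex J)
    (hJ2 : ∀ α ∈ J, α.degree = 2) {i j k : σ} (hik : single i 1 + single k 1 ∈ J)
    {β : σ →₀ ℕ} (hβ : β ∈ J) (hj : β j ≠ 0) :
    single i 1 + single j 1 ∈ J ∨ single j 1 + single k 1 ∈ J := by
  classical
  by_cases hji : j = i
  · exact .inr (hji ▸ hik)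
  by_cases hjk : j = k
  · exact .inl (hjk ▸ hik)
  by_cases hi : β i ≠ 0
  · exact .inl (eq_single_add_single_of_degree_eq_two (hJ2 β hβ) (Ne.symm hji) hi hj ▸ hβ)
  obtain ⟨m, hm, hαm, hβm⟩ := hJ _ hik β hβ i (by simp_all)
  by_cases hmj : m = j
  · subst hmj
    rw [add_tsub_cancel_left, add_comm] at hαm
    exact .inr hαm
  · refine .inl (eq_single_add_single_of_degree_eq_two (hJ2 _ hβm) (Ne.symm hji) ?_ ?_ ▸ hβm)
    · simp [single_apply]
    · simp [hmj, hji, hj]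

def Unpaired (J : Set (σ →₀ ℕ)) (i j : σ) : Prop :=
  (∃ α ∈ J, α i ≠ 0) ∧ (∃ α ∈ J, α j ≠ 0) ∧ single i 1 + single j 1 ∉ J

theorem Unpaired.symm {J : Set (σ →₀ ℕ)} {i j : σ} (h : Unpaired J i j) : Unpaired J j i :=
  ⟨h.2.1, h.1, add_comm (single i 1) (single j 1) ▸ h.2.2⟩

theorem MConvex.unpaired_trans {J : Set (σ →₀ ℕ)} (hJ : MConvex J) (hJ2 : ∀ α ∈ J, α.degree = 2)
    {i j k : σ} (hij : Unpaired J i j) (hjk : Unpaired J j k) : Unpaired J i k := by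
  refine ⟨hij.1, hjk.2.1, fun hik => ?_⟩
  obtain ⟨β, hβ, hβj⟩ := hij.2.1
  exact (hJ.single_add_single_mem_or hJ2 hik hβ hβj).elim hij.2.2 hjk.2.2

end ExponentSets

section NormalizedGenPoly

variable {σ : Type*}

noncomputable def factorialProd (α : σ →₀ ℕ) : ℝ := α.prod fun _ m => (m.factorial : ℝ)

theorem factorialProd_pos (α : σ →₀ ℕ) : 0 < factorialProd α :=
  Finset.prod_pos fun _ _ => by positivity

theorem factorialProd_zero : factorialProd (0 : σ →₀ ℕ) = 1 := prod_zero_index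

theorem factorialProd_add_single (β : σ →₀ ℕ) (i : σ) :
    factorialProd (β + single i 1) = (β i + 1) * factorialProd β := by
  classical
  have h0 : ∀ _ : σ, ((0 : ℕ).factorial : ℝ) = 1 := fun _ => by simp
  rw [factorialProd, factorialProd, ← mul_prod_erase' _ i _ h0, ← mul_prod_erase' β i _ h0,
    erase_add, erase_single, add_zero, Finsupp.add_apply, single_eq_same, Nat.factorial_succ]
  push_cast
  ring

noncomputable def normalizedGenPoly (J : Finset (σ →₀ ℕ)) : MvPolynomial σ ℝ :=
  ∑ α ∈ J, monomial α (1 / factorialProd α)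

theorem coeff_normalizedGenPoly [DecidableEq σ] (J : Finset (σ →₀ ℕ)) (β : σ →₀ ℕ) :
    (normalizedGenPoly J).coeff β = if β ∈ J then 1 / factorialProd β else 0 := by
  simp only [normalizedGenPoly, coeff_sum, coeff_monomial, Finset.sum_ite_eq']

theorem coeff_normalizedGenPoly_nonneg (J : Finset (σ →₀ ℕ)) (β : σ →₀ ℕ) :
    0 ≤ (normalizedGenPoly J).coeff β := by
  classical
  rw [coeff_normalizedGenPoly]
  split_ifs
  · exact (one_div_pos.mpr (factorialProd_pos β)).le
  · exact le_rfl

theorem support_normalizedGenPoly (J : Finset (σ →₀ ℕ)) : (normalizedGenPoly J).support = J := by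
  classical
  ext β
  rw [MvPolynomial.mem_support_iff, coeff_normalizedGenPoly]
  split_ifs with hβ
  · simpa [hβ] using (factorialProd_pos β).ne'
  · simpa using hβ

theorem isHomogeneous_normalizedGenPoly {J : Finset (σ →₀ ℕ)} {d : ℕ}
    (hd : ∀ α ∈ J, α.degree = d) : (normalizedGenPoly J).IsHomogeneous d :=
  IsHomogeneous.sum _ _ _ fun α hα => isHomogeneous_monomial _ (hd α hα)

noncomputable def shiftDown (i : σ) (J : Finset (σ →₀ ℕ)) : Finset (σ →₀ ℕ) :=
  J.preimage (· + single i 1) (add_left_injective _).injOn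

@[simp]
theorem mem_shiftDown {i : σ} {J : Finset (σ →₀ ℕ)} {β : σ →₀ ℕ} :
    β ∈ shiftDown i J ↔ β + single i 1 ∈ J :=
  Finset.mem_preimage

theorem pderiv_normalizedGenPoly (i : σ) (J : Finset (σ →₀ ℕ)) :
    pderiv i (normalizedGenPoly J) = normalizedGenPoly (shiftDown i J) := by
  classical
  ext β
  simp only [coeff_pderiv, coeff_normalizedGenPoly, mem_shiftDown, factorialProd_add_single]
  have := (factorialProd_pos β).ne'
  split_ifs
  · field_simp
  · rw [zero_mul]

end NormalizedGenPoly

section SumOfSquares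

variable {ι κ : Type*} [DecidableEq κ]

theorem sum_sum_ite_eq_mul_eq_sum_sq (S : Finset ι) (k : ι → κ) (x : ι → ℝ) :
    ∑ i ∈ S, ∑ j ∈ S, (if k i = k j then x i * x j else 0)
      = ∑ c ∈ S.image k, (∑ i ∈ S with k i = c, x i) ^ 2 := by
  symm
  calc ∑ c ∈ S.image k, (∑ i ∈ S with k i = c, x i) ^ 2
      = ∑ c ∈ S.image k, ∑ i ∈ S with k i = c, x i * ∑ j ∈ S with k j = k i, x j := by
        refine Finset.sum_congr rfl fun c _ => ?_
        rw [sq, Finset.sum_mul]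
        refine Finset.sum_congr rfl fun i hi => ?_
        rw [(Finset.mem_filter.mp hi).2]
    _ = ∑ i ∈ S, x i * ∑ j ∈ S with k j = k i, x j :=
        Finset.sum_fiberwise_of_maps_to (fun i hi => Finset.mem_image_of_mem k hi) _
    _ = ∑ i ∈ S, ∑ j ∈ S, (if k i = k j then x i * x j else 0) := by
        refine Finset.sum_congr rfl fun i _ => ?_
        rw [Finset.sum_filter, Finset.mul_sum]
        exact Finset.sum_congr rfl fun j _ => by split_ifs <;> simp_all [eq_comm]

end SumOfSquares

theorem sum_sum_ite_mul_nonneg_of_symm_of_trans {ι : Type*} [Fintype ι] {r : ι → ι → Prop}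
    [DecidableRel r] (hsymm : ∀ {i j}, r i j → r j i)
    (htrans : ∀ {i j l}, r i j → r j l → r i l) (x : ι → ℝ) :
    0 ≤ ∑ i, ∑ j, if r i j then x i * x j else 0 := by
  classical
  let cls : ι → Finset ι := fun i => {j | r i j}
  have hr : ∀ i j, r i j ↔ r i i ∧ r j j ∧ cls i = cls j := fun i j => by
    refine ⟨fun h => ⟨htrans h (hsymm h), htrans (hsymm h) h, ?_⟩, fun ⟨hi, _, h⟩ => ?_⟩
    · ext l
      simp only [cls, Finset.mem_filter, Finset.mem_univ, true_and]
      exact ⟨htrans (hsymm h), htrans h⟩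
    · have : i ∈ cls j := h ▸ by simpa [cls] using hi
      exact hsymm (by simpa [cls] using this)
  let D : Finset ι := {i | r i i}
  calc (0 : ℝ) ≤ ∑ c ∈ D.image cls, (∑ i ∈ D with cls i = c, x i) ^ 2 := by positivity
    _ = ∑ i, ∑ j, if r i j then x i * x j else 0 := by
        rw [← sum_sum_ite_eq_mul_eq_sum_sq, Finset.sum_filter]
        refine Finset.sum_congr rfl fun i _ => ?_
        rw [Finset.sum_filter]
        split_ifs with hi
        · refine Finset.sum_congr rfl fun j _ => ?_
          simp only [hr i j, hi, true_and, ite_and]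
        · exact (Finset.sum_eq_zero fun j _ => by simp [hr i j, hi]).symm

theorem atMostOnePosEig_of_dotProduct_mulVec_nonpos {n : ℕ} {H : Matrix (Fin n) (Fin n) ℝ}
    (hH : H.IsHermitian) (w : Fin n → ℝ) (hneg : ∀ x, w ⬝ᵥ x = 0 → x ⬝ᵥ (H *ᵥ x) ≤ 0) :
    AtMostOnePosEig H := by
  refine ⟨hH, Finset.card_le_one.mpr fun i hi j hj => ?_⟩
  by_contra hij
  simp only [Finset.mem_filter, Finset.mem_univ, true_and] at hi hj
  have horth : ∀ k l, hH.eigenvectorBasis k ⬝ᵥ hH.eigenvectorBasis l = if k = l then 1 else 0 :=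
    fun k l => by
      simpa [EuclideanSpace.inner_eq_star_dotProduct, dotProduct_comm] using
        orthonormal_iff_ite.mp hH.eigenvectorBasis.orthonormal k l
  set v := ⇑(hH.eigenvectorBasis i)
  set u := ⇑(hH.eigenvectorBasis j)
  have hQ (a b : ℝ) : (a • v + b • u) ⬝ᵥ (H *ᵥ (a • v + b • u))
      = a ^ 2 * hH.eigenvalues i + b ^ 2 * hH.eigenvalues j := by
    simp only [v, u, Matrix.mulVec_add, Matrix.mulVec_smul, hH.mulVec_eigenvectorBasis,
      dotProduct_add, dotProduct_smul, add_dotProduct, smul_dotProduct, horth, if_pos, if_neg hij,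
      if_neg (Ne.symm hij), smul_eq_mul, mul_one, mul_zero, add_zero, zero_add]
    ring
  -- the plane spanned by `v` and `u`, on which the form is positive definite, meets `w⊥`
  by_cases hv : w ⬝ᵥ v = 0
  · have := hQ 1 0 ▸ hneg (1 • v + 0 • u) (by simpa using hv)
    nlinarith
  · have := hQ (w ⬝ᵥ u) (-(w ⬝ᵥ v)) ▸ hneg ((w ⬝ᵥ u) • v + (-(w ⬝ᵥ v)) • u)
      (by simp only [dotProduct_add, dotProduct_smul, smul_eq_mul]; ring)
    have : 0 < (w ⬝ᵥ v) ^ 2 := by positivity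
    nlinarith [sq_nonneg (w ⬝ᵥ u)]

section Hessian

variable {n : ℕ}

open Classical in
theorem sum_sum_ite_single_add_single_mem (J : Finset (Fin n →₀ ℕ)) (x : Fin n → ℝ) :
    ∑ i, ∑ j, (if single i 1 + single j 1 ∈ J then x i * x j else 0)
      = ((fun i => if ∃ α ∈ J, α i ≠ 0 then 1 else 0) ⬝ᵥ x) ^ 2
        - ∑ i, ∑ j, (if Unpaired J i j then x i * x j else 0) := by
  rw [sq, dotProduct, Finset.sum_mul_sum, ← Finset.sum_sub_distrib]
  refine Finset.sum_congr rfl fun i _ => ?_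
  rw [← Finset.sum_sub_distrib]
  refine Finset.sum_congr rfl fun j _ => ?_
  have hi (h : single i 1 + single j 1 ∈ J) : ∃ α ∈ J, α i ≠ 0 := ⟨_, h, by simp⟩
  have hj (h : single i 1 + single j 1 ∈ J) : ∃ α ∈ J, α j ≠ 0 := ⟨_, h, by simp⟩
  simp only [Unpaired, Finset.mem_coe]
  split_ifs <;> simp_all

theorem hessMv_normalizedGenPoly (J : Finset (Fin n →₀ ℕ)) (i j : Fin n) :
    hessMv (normalizedGenPoly J) i j = if single i 1 + single j 1 ∈ J then 1 else 0 := by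
  simp only [hessMv, pderiv_normalizedGenPoly, coeff_normalizedGenPoly, mem_shiftDown, zero_add,
    factorialProd_zero, div_one]

theorem isHermitian_hessMv_normalizedGenPoly (J : Finset (Fin n →₀ ℕ)) :
    (hessMv (normalizedGenPoly J)).IsHermitian := by
  ext i j
  simp only [Matrix.conjTranspose_apply, hessMv_normalizedGenPoly, star_trivial,
    add_comm (single j 1)]

theorem dotProduct_hessMv_normalizedGenPoly_mulVec (J : Finset (Fin n →₀ ℕ)) (x : Fin n → ℝ) :
    x ⬝ᵥ (hessMv (normalizedGenPoly J) *ᵥ x)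
      = ∑ i, ∑ j, (if single i 1 + single j 1 ∈ J then x i * x j else 0) := by
  simp only [dotProduct, Matrix.mulVec, hessMv_normalizedGenPoly, Finset.mul_sum]
  refine Finset.sum_congr rfl fun i _ => Finset.sum_congr rfl fun j _ => ?_
  split_ifs <;> ring

theorem MConvex.atMostOnePosEig_hessMv_normalizedGenPoly {J : Finset (Fin n →₀ ℕ)}
    (hJ : MConvex (J : Set (Fin n →₀ ℕ))) (hJ2 : ∀ α ∈ J, α.degree = 2) :
    AtMostOnePosEig (hessMv (normalizedGenPoly J)) := by
  classical
  refine atMostOnePosEig_of_dotProduct_mulVec_nonpos (isHermitian_hessMv_normalizedGenPoly J)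
    (fun i => if ∃ α ∈ J, α i ≠ 0 then 1 else 0) fun x hx => ?_
  rw [dotProduct_hessMv_normalizedGenPoly_mulVec, sum_sum_ite_single_add_single_mem, hx]
  have := sum_sum_ite_mul_nonneg_of_symm_of_trans (r := Unpaired (J : Set (Fin n →₀ ℕ)))
    Unpaired.symm (hJ.unpaired_trans hJ2) x
  linarith

end Hessian

theorem MConvex.lorentzian_normalizedGenPoly {n : ℕ} :
    ∀ (d : ℕ) (J : Finset (Fin n →₀ ℕ)), MConvex (J : Set (Fin n →₀ ℕ)) →
      (∀ α ∈ J, α.degree = d) → Lorentzian d (normalizedGenPoly J)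
  | 0, J, _, hd => ⟨isHomogeneous_normalizedGenPoly hd, coeff_normalizedGenPoly_nonneg J⟩
  | 1, J, _, hd => ⟨isHomogeneous_normalizedGenPoly hd, coeff_normalizedGenPoly_nonneg J⟩
  | 2, J, hJ, hd => ⟨isHomogeneous_normalizedGenPoly hd, coeff_normalizedGenPoly_nonneg J,
      (support_normalizedGenPoly J).symm ▸ hJ, hJ.atMostOnePosEig_hessMv_normalizedGenPoly hd⟩
  | d + 3, J, hJ, hd => ⟨isHomogeneous_normalizedGenPoly hd, coeff_normalizedGenPoly_nonneg J,
      (support_normalizedGenPoly J).symm ▸ hJ, fun i => by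
        rw [pderiv_normalizedGenPoly]
        refine MConvex.lorentzian_normalizedGenPoly (d + 2) _ ?_ fun β hβ => ?_
        · rw [shiftDown, Finset.coe_preimage]
          exact hJ.preimage_add_single i
        · simpa using hd _ (mem_shiftDown.mp hβ)⟩

/-- For an M-convex set `J` (whose elements all have coordinate sum `d`),
the polynomial `f_J = Σ_{α ∈ J} x^α/α!` is Lorentzian. -/
theorem stmt3 {n d : ℕ} (J : Finset (Fin n →₀ ℕ))
    (hJ : MConvex ((J : Finset (Fin n →₀ ℕ)) : Set (Fin n →₀ ℕ)))
    (hd : ∀ α ∈ J, (∑ i, α i) = d) :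
    Lorentzian d (∑ α ∈ J,
      MvPolynomial.monomial α ((1 : ℝ) / (α.prod fun _ m => (Nat.factorial m : ℝ)))) :=
  hJ.lorentzian_normalizedGenPoly d J fun α hα => (degree_eq_sum α).trans (hd α hα)
end

section
/- Let D be a finite connected planar Eulerian digraph whose edges alternate in/out around each vertex (an alternating dimap), with clockwise-oriented face cycles C_1, ..., C_k partitioning the edge set. Let T be any spanning tree of the underlying undirected graph of D, and fix a root vertex r. Then there exists a spanning arborescence A of D rooted at r (a spanning tree in which every vertex is reachable from r by a directed path) such that for each i ∈ [k], the number of edges of A lying in C_i equals the number of edges of T lying in C_i. -/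
/-- A finite directed multigraph given by source and target maps. -/
structure DigraphStr (V E : Type) where
  src : E → V
  tgt : E → V

namespace DigraphStr

variable {V E : Type} (D : DigraphStr V E)

/-- Directed paths (lists of edges) inside an edge set `T`. -/
inductive DPath (T : Set E) : V → V → List E → Prop
  | nil (v : V) : DPath T v v []
  | cons {u w : V} {e : E} {p : List E} (he : e ∈ T) (hu : D.src e = u)
      (hp : DPath T (D.tgt e) w p) : DPath T u w (e :: p)

/-- Undirected walks (lists of edges, traversed forwards or backwards) inside `T`. -/
inductive UWalk (T : Set E) : V → V → List E → Prop
  | nil (v : V) : UWalk T v v []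
  | consF {u w : V} {e : E} {p : List E} (he : e ∈ T) (hu : D.src e = u)
      (hp : UWalk T (D.tgt e) w p) : UWalk T u w (e :: p)
  | consB {u w : V} {e : E} {p : List E} (he : e ∈ T) (hu : D.tgt e = u)
      (hp : UWalk T (D.src e) w p) : UWalk T u w (e :: p)

/-- `T` is a spanning arborescence rooted at `r`: there is a unique directed
path in `T` from `r` to every vertex. -/
def IsArborescence (T : Set E) (r : V) : Prop :=
  ∀ v : V, ∃! p : List E, D.DPath T r v p

/-- The edge set `T` connects all vertices (in the underlying undirected graph). -/
def Conn (T : Set E) : Prop := ∀ u v : V, ∃ p : List E, D.UWalk T u v p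

/-- `T` is a spanning tree of the underlying undirected graph. -/
def IsSpanningTree [Fintype V] (T : Finset E) : Prop :=
  D.Conn ↑T ∧ T.card + 1 = Fintype.card V

/-- A (nonempty, edge-distinct) directed cycle, given by its list of edges in order. -/
def IsDirCycle (c : List E) : Prop :=
  c ≠ [] ∧ c.Nodup ∧
    ∀ i : Fin c.length,
      D.tgt (c.get i) = D.src (c.get ⟨((i : ℕ) + 1) % c.length, Nat.mod_lt _ i.pos⟩)

end DigraphStr

/-- A planar alternating dimap, encoded as an oriented combinatorial map: the
clockwise faces are directed cycles `cw 1, …, cw k` and the counterclockwise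
faces are directed cycles `ccw 1, …, ccw m`; every edge lies on exactly one
cycle of each family, the underlying graph is connected, and Euler's formula
`|V| - |E| + (k + m) = 2` holds (genus zero, i.e. planarity). -/
structure AltDimap (V E : Type) [Fintype V] [Fintype E] (k : ℕ) extends DigraphStr V E where
  m : ℕ
  cw : Fin k → List E
  ccw : Fin m → List E
  cw_cycle : ∀ i, toDigraphStr.IsDirCycle (cw i)
  ccw_cycle : ∀ j, toDigraphStr.IsDirCycle (ccw j)
  cw_partition : ∀ e : E, ∃! i : Fin k, e ∈ cw i
  ccw_partition : ∀ e : E, ∃! j : Fin m, e ∈ ccw j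
  conn : toDigraphStr.Conn Set.univ
  euler : Fintype.card V + (k + m) = Fintype.card E + 2

/-!
Induct on the number of vertices. First make the root a source of the tree by exchanges: if a
tree edge `g` enters `r`, the clockwise cycle through `g` enters the component of `tgt g` in
`T - g` along `g`, so it also leaves it along some edge `y`, and `T - g + y` is again a spanning
tree, with the same number of edges on every cycle and fewer edges entering `r`. Then take a tree
edge `e₀` out of `r`, contract it (merging `tgt e₀` into `r`), apply induction to the contracted
tree, and add `e₀` back to the arborescence obtained.
-/

namespace Finset

lemma card_filter_insert_of_notMem {α : Type*} [DecidableEq α] {p : α → Prop} [DecidablePred p]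
    {s : Finset α} {a : α} (ha : a ∉ s) :
    #((insert a s).filter p) = #(s.filter p) + if p a then 1 else 0 := by
  simp only [card_filter, sum_insert ha, add_comm]

end Finset

namespace DigraphStr

open Finset

variable {V W E : Type} {D : DigraphStr V E}

section Component

variable (D) in
def component (S : Set E) (b : V) : Set V := {a | ∃ p, D.UWalk S a b p}

variable (D) in
def IsSaturated (S : Set E) (R : Set V) : Prop := ∀ e ∈ S, D.src e ∈ R ↔ D.tgt e ∈ R

variable {S S' : Set E} {R : Set V} {a b : V}

lemma mem_component_self : b ∈ D.component S b := ⟨[], .nil b⟩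

lemma isSaturated_component : D.IsSaturated S (D.component S b) := fun e he =>
  ⟨fun ⟨p, hp⟩ => ⟨e :: p, .consB he rfl hp⟩,
    fun ⟨p, hp⟩ => ⟨e :: p, .consF he rfl hp⟩⟩

lemma IsSaturated.mono (h : S ⊆ S') (hR : D.IsSaturated S' R) : D.IsSaturated S R :=
  fun e he => hR e (h he)

lemma IsSaturated.component_subset (hR : D.IsSaturated S R) (hb : b ∈ R) :
    D.component S b ⊆ R := by
  rintro a ⟨p, hp⟩
  induction hp with
  | nil => exact hb
  | consF he hu _ ih => exact hu ▸ (hR _ he).2 (ih hb)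
  | consB he hu _ ih => exact hu ▸ (hR _ he).1 (ih hb)

lemma component_mono (h : S ⊆ S') : D.component S b ⊆ D.component S' b :=
  (isSaturated_component.mono h).component_subset mem_component_self

lemma component_subset_of_mem (h : a ∈ D.component S b) : D.component S a ⊆ D.component S b :=
  isSaturated_component.component_subset h

lemma mem_component_comm : a ∈ D.component S b ↔ b ∈ D.component S a := by
  suffices h : ∀ a b, a ∈ D.component S b → b ∈ D.component S a from ⟨h a b, h b a⟩
  intro a b hab
  have hR : D.IsSaturated S {x | b ∈ D.component S x} := fun e he =>
    ⟨fun hb => component_subset_of_mem ((isSaturated_component e he).2 mem_component_self) hb,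
      fun hb => component_subset_of_mem ((isSaturated_component e he).1 mem_component_self) hb⟩
  exact hR.component_subset mem_component_self hab

lemma conn_of_forall_mem_component (h : ∀ a, a ∈ D.component S b) : D.Conn S := fun a c =>
  component_subset_of_mem (mem_component_comm.1 (h c)) (h a)

lemma Conn.mem_component_diff_or (h : D.Conn S) (g : E) (v : V) :
    v ∈ D.component (S \ {g}) (D.tgt g) ∨ v ∈ D.component (S \ {g}) (D.src g) := by
  have hR : D.IsSaturated S
      (D.component (S \ {g}) (D.tgt g) ∪ D.component (S \ {g}) (D.src g)) := fun e he => by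
    by_cases heg : e = g
    · subst heg
      exact iff_of_true (Or.inr mem_component_self) (Or.inl mem_component_self)
    · exact or_congr (isSaturated_component e ⟨he, heg⟩) (isSaturated_component e ⟨he, heg⟩)
  exact hR.component_subset (Or.inl mem_component_self) (h v (D.tgt g))

lemma Conn.exists_src_eq (h : D.Conn S) (hin : ∀ e ∈ S, D.tgt e ≠ a) (hb : b ≠ a) :
    ∃ e ∈ S, D.src e = a := by
  obtain ⟨p, hp⟩ := h a b
  cases hp with
  | nil => exact absurd rfl hb
  | consF he hu _ => exact ⟨_, he, hu⟩
  | consB he hu _ => exact absurd hu (hin _ he)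

end Component

section Graph

variable (D) in
def graph (S : Set E) : SimpleGraph V :=
  SimpleGraph.fromEdgeSet ((fun e => s(D.src e, D.tgt e)) '' S)

lemma reachable_of_mem_component {S : Set E} {a b : V} (h : a ∈ D.component S b) :
    (D.graph S).Reachable a b := by
  have hR : D.IsSaturated S {x | (D.graph S).Reachable x b} := fun e he => by
    have hst : (D.graph S).Reachable (D.src e) (D.tgt e) := by
      by_cases hl : D.src e = D.tgt e
      · exact hl ▸ .refl _
      · exact SimpleGraph.Adj.reachable
          (by simpa [graph, hl] using ⟨e, he, Or.inl ⟨rfl, rfl⟩⟩)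
    exact ⟨hst.symm.trans, hst.trans⟩
  exact hR.component_subset (.refl b) h

lemma Conn.card_le [Fintype V] {S : Finset E} (h : D.Conn ↑S) : Fintype.card V ≤ #S + 1 := by
  cases isEmpty_or_nonempty V
  · simp
  have hG : (D.graph ↑S).Connected := ⟨fun a b => reachable_of_mem_component (h a b)⟩
  have hsub : (D.graph ↑S).edgeSet ⊆ (fun e => s(D.src e, D.tgt e)) '' ↑S := by
    simp [graph, SimpleGraph.edgeSet_fromEdgeSet]
  calc Fintype.card V = Nat.card V := Nat.card_eq_fintype_card.symm
    _ ≤ Nat.card (D.graph ↑S).edgeSet + 1 := hG.card_vert_le_card_edgeSet_add_one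
    _ ≤ #S + 1 := by
      rw [Nat.card_coe_set_eq, ← Set.ncard_coe_finset S]
      gcongr
      exact (Set.ncard_le_ncard hsub (S.finite_toSet.image _)).trans
        (Set.ncard_image_le S.finite_toSet)

end Graph

section Cycle

lemma IsDirCycle.map_tgt_perm {c : List E} (hc : D.IsDirCycle c) :
    (c.map D.tgt).Perm (c.map D.src) := by
  have hrot : c.map D.tgt = (c.map D.src).rotate 1 := by
    refine List.ext_getElem (by simp) fun i h _ => ?_
    simpa using hc.2.2 ⟨i, by simpa using h⟩
  exact hrot ▸ List.rotate_perm _ _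

lemma IsDirCycle.exists_src_mem_tgt_not_mem {c : List E} (hc : D.IsDirCycle c) {K : Set V}
    {g : E} (hg : g ∈ c) (hsrc : D.src g ∉ K) (htgt : D.tgt g ∈ K) :
    ∃ y ∈ c, D.src y ∈ K ∧ D.tgt y ∉ K := by
  classical
  by_contra! hK
  have hcount : c.countP (fun e => D.tgt e ∈ K) = c.countP (fun e => D.src e ∈ K) := by
    simpa [List.countP_map, Function.comp_def] using
      hc.map_tgt_perm.countP_eq (fun x => decide (x ∈ K))
  have hlt : c.countP (fun e => D.src e ∈ K) < c.countP (fun e => D.tgt e ∈ K) := calc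
    c.countP (fun e => D.src e ∈ K)
      = (c.filter fun e => D.tgt e ∈ K).countP (fun e => D.src e ∈ K) := by
        rw [List.countP_filter]
        exact List.countP_congr fun e he => by simpa using hK e he
    _ < (c.filter fun e => D.tgt e ∈ K).length :=
        List.countP_lt_length_iff.2 ⟨g, by simp [hg, htgt], by simp [hsrc]⟩
    _ = c.countP (fun e => D.tgt e ∈ K) := List.countP_eq_length_filter.symm
  omega

end Cycle

section SpanningTree

variable [Fintype V] [DecidableEq E] {T : Finset E} {g : E}

lemma IsSpanningTree.not_conn_erase (hT : D.IsSpanningTree T) (hg : g ∈ T) :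
    ¬ D.Conn ↑(T.erase g) := fun h => by
  have := h.card_le
  have := hT.2
  have := card_erase_add_one hg
  omega

lemma IsSpanningTree.src_not_mem_component (hT : D.IsSpanningTree T) (hg : g ∈ T) :
    D.src g ∉ D.component (↑T \ {g}) (D.tgt g) := by
  intro hsrc
  apply hT.not_conn_erase hg
  rw [coe_erase]
  refine conn_of_forall_mem_component (b := D.tgt g) fun v => ?_
  rcases hT.1.mem_component_diff_or g v with h | h
  · exact h
  · exact component_subset_of_mem hsrc h

lemma IsSpanningTree.src_ne_tgt (hT : D.IsSpanningTree T) (hg : g ∈ T) : D.src g ≠ D.tgt g :=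
  fun h => hT.src_not_mem_component hg (h ▸ mem_component_self)

lemma IsSpanningTree.exists_exchange (hT : D.IsSpanningTree T) (hg : g ∈ T) {c : List E}
    (hc : D.IsDirCycle c) (hgc : g ∈ c) :
    ∃ y ∈ c, y ∉ T ∧ D.tgt y ≠ D.tgt g ∧ D.IsSpanningTree (insert y (T.erase g)) := by
  have hsrc := hT.src_not_mem_component hg
  obtain ⟨y, hyc, hyK, hyK'⟩ := hc.exists_src_mem_tgt_not_mem hgc hsrc mem_component_self
  have hyg : y ≠ g := fun h => hsrc (h ▸ hyK)
  have hyT : y ∉ T := fun hyT =>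
    hyK' ((isSaturated_component y (show y ∈ ↑T \ {g} from ⟨hyT, hyg⟩)).1 hyK)
  refine ⟨y, hyc, hyT, fun h => hyK' (h ▸ mem_component_self), And.intro ?_ ?_⟩
  · have hsub : ↑T \ {g} ⊆ (↑(insert y (T.erase g)) : Set E) := by
      intro e he
      simp_all
    have hy : D.tgt y ∈ D.component (↑(insert y (T.erase g))) (D.tgt g) :=
      (isSaturated_component y (by simp)).1 (component_mono hsub hyK)
    have hs : D.src g ∈ D.component (↑(insert y (T.erase g))) (D.tgt g) :=
      component_subset_of_mem hy <| component_mono hsub <|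
        mem_component_comm.1 ((hT.1.mem_component_diff_or g _).resolve_left hyK')
    refine conn_of_forall_mem_component (b := D.tgt g) fun v => ?_
    rcases hT.1.mem_component_diff_or g v with h | h
    · exact component_mono hsub h
    · exact component_subset_of_mem hs (component_mono hsub h)
  · rw [card_insert_of_notMem (fun h => hyT (mem_of_mem_erase h)), card_erase_add_one hg]
    exact hT.2

lemma IsSpanningTree.exists_forall_tgt_ne {ι : Type*} {C : ι → List E}
    (hC : ∀ i, D.IsDirCycle (C i)) (hpart : ∀ e, ∃! i, e ∈ C i) (hT : D.IsSpanningTree T)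
    (r : V) :
    ∃ T' : Finset E, D.IsSpanningTree T' ∧ (∀ e ∈ T', D.tgt e ≠ r) ∧
      ∀ i, #(T'.filter (· ∈ C i)) = #(T.filter (· ∈ C i)) := by
  classical
  induction hn : #(T.filter (D.tgt · = r)) using Nat.strong_induction_on generalizing T with
  | _ n ih =>
  by_cases hin : ∃ g ∈ T, D.tgt g = r
  swap
  · exact ⟨T, hT, fun e he h => hin ⟨e, he, h⟩, fun _ => rfl⟩
  obtain ⟨g, hg, hgr⟩ := hin
  obtain ⟨i, hgi, hi⟩ := hpart g
  obtain ⟨y, hyi, hyT, hyg, hT'⟩ := hT.exists_exchange hg (hC i) hgi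
  have hcol : ∀ j, y ∈ C j ↔ g ∈ C j := fun j =>
    ⟨fun hj => (hpart y).unique hj hyi ▸ hgi, fun hj => hi j hj ▸ hyi⟩
  have hlt : #((insert y (T.erase g)).filter (D.tgt · = r)) < n := by
    rw [filter_insert, if_neg (hgr ▸ hyg), filter_erase, ← hn]
    exact card_erase_lt_of_mem (mem_filter.2 ⟨hg, hgr⟩)
  obtain ⟨T'', hT'', hin'', hcount⟩ := ih _ hlt hT' rfl
  refine ⟨T'', hT'', hin'', fun j => (hcount j).trans ?_⟩
  rw [card_filter_insert_of_notMem (fun h => hyT (mem_of_mem_erase h)),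
    if_congr (hcol j) rfl rfl, ← card_filter_insert_of_notMem (notMem_erase g T), insert_erase hg]

end SpanningTree

section Arborescence

variable {S : Set E} {R : Set V} {a b r : V}

lemma dPath_nil_iff : D.DPath S a b [] ↔ a = b :=
  ⟨fun h => by cases h; rfl, fun h => h ▸ .nil a⟩

lemma dPath_concat_iff {e : E} {p : List E} :
    D.DPath S a b (p ++ [e]) ↔ D.DPath S a (D.src e) p ∧ e ∈ S ∧ D.tgt e = b := by
  induction p generalizing a with
  | nil =>
    constructor
    · rintro (⟨⟩ | ⟨he, rfl, hp⟩)
      exact ⟨.nil _, he, dPath_nil_iff.1 hp⟩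
    · rintro ⟨hp, he, rfl⟩
      exact .cons he (dPath_nil_iff.1 hp).symm (.nil _)
  | cons f p ih =>
    constructor
    · rintro (⟨⟩ | ⟨hf, rfl, hp⟩)
      obtain ⟨hp', he, rfl⟩ := ih.1 hp
      exact ⟨.cons hf rfl hp', he, rfl⟩
    · rintro ⟨(⟨⟩ | ⟨hf, rfl, hp⟩), he, rfl⟩
      exact .cons hf rfl (ih.2 ⟨hp, he, rfl⟩)

lemma DPath.mem_of_closed (hR : ∀ e ∈ S, D.src e ∈ R → D.tgt e ∈ R) {p : List E}
    (h : D.DPath S a b p) (ha : a ∈ R) : b ∈ R := by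
  induction h with
  | nil => exact ha
  | cons he hu _ ih => exact ih (hR _ he (hu ▸ ha))

lemma DPath.eq_of_injOn_tgt (hr : ∀ e ∈ S, D.tgt e ≠ r) (hin : Set.InjOn D.tgt S)
    {v : V} {p q : List E} (hp : D.DPath S r v p) (hq : D.DPath S r v q) : p = q := by
  induction p using List.reverseRecOn generalizing v q with
  | nil =>
    obtain rfl := dPath_nil_iff.1 hp
    obtain rfl | ⟨q, f, rfl⟩ := q.eq_nil_or_concat'
    · rfl
    · obtain ⟨-, hf, hfr⟩ := dPath_concat_iff.1 hq
      exact absurd hfr (hr f hf)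
  | append_singleton p e ih =>
    rw [dPath_concat_iff] at hp
    obtain ⟨hp, he, rfl⟩ := hp
    obtain rfl | ⟨q, f, rfl⟩ := q.eq_nil_or_concat'
    · exact absurd (dPath_nil_iff.1 hq).symm (hr e he)
    · obtain ⟨hq, hf, hef⟩ := dPath_concat_iff.1 hq
      obtain rfl := hin he hf hef.symm
      rw [ih hp hq]

lemma isArborescence_iff : D.IsArborescence S r ↔
    (∀ v, ∃ p, D.DPath S r v p) ∧ (∀ e ∈ S, D.tgt e ≠ r) ∧ Set.InjOn D.tgt S := by
  constructor
  · intro h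
    have hlast : ∀ e ∈ S, ∃ p, D.DPath S r (D.tgt e) (p ++ [e]) := fun e he =>
      let ⟨p, hp, _⟩ := h (D.src e)
      ⟨p, dPath_concat_iff.2 ⟨hp, he, rfl⟩⟩
    refine ⟨fun v => (h v).exists, fun e he her => ?_, fun e he f hf hef => ?_⟩
    · obtain ⟨p, hp⟩ := hlast e he
      rw [her] at hp
      simpa using (h r).unique hp (.nil r)
    · obtain ⟨p, hp⟩ := hlast e he
      obtain ⟨q, hq⟩ := hlast f hf
      rw [hef] at hp
      simpa using (List.append_inj' ((h _).unique hp hq) rfl).2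
  · rintro ⟨hreach, hr, hin⟩ v
    obtain ⟨p, hp⟩ := hreach v
    exact ⟨p, hp, fun q hq => DPath.eq_of_injOn_tgt hr hin hq hp⟩

end Arborescence

section Contraction

variable (D) in
def map (π : V → W) : DigraphStr W E := ⟨π ∘ D.src, π ∘ D.tgt⟩

lemma IsDirCycle.map {c : List E} (hc : D.IsDirCycle c) (π : V → W) :
    (D.map π).IsDirCycle c :=
  ⟨hc.1, hc.2.1, fun i => congrArg π (hc.2.2 i)⟩

lemma mem_component_map {π : V → W} {S S' : Set E} {a b : V}
    (hS : ∀ e ∈ S, e ∈ S' ∨ π (D.src e) = π (D.tgt e)) (h : a ∈ D.component S b) :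
    π a ∈ (D.map π).component S' (π b) := by
  have hR : D.IsSaturated S {x | π x ∈ (D.map π).component S' (π b)} := fun e he => by
    rcases hS e he with he' | hπ
    · exact isSaturated_component (D := D.map π) e he'
    · exact iff_of_eq (congrArg (· ∈ (D.map π).component S' (π b)) hπ)
  exact hR.component_subset mem_component_self h

variable [DecidableEq V]

def mergeInto {r u : V} (hru : r ≠ u) (x : V) : {v : V // v ≠ u} :=
  if h : x = u then ⟨r, hru⟩ else ⟨x, h⟩

variable {r u x z : V} (hru : r ≠ u)

lemma mergeInto_self : mergeInto hru u = ⟨r, hru⟩ := dif_pos rfl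

lemma mergeInto_of_ne (hx : x ≠ u) : mergeInto hru x = ⟨x, hx⟩ := dif_neg hx

lemma mergeInto_val (x : {v : V // v ≠ u}) : mergeInto hru x.1 = x := dif_neg x.2

variable {hru} in
lemma eq_or_eq_or_eq_of_mergeInto_eq (h : mergeInto hru x = mergeInto hru z) :
    x = z ∨ x = u ∨ x = r := by
  by_cases hx : x = u
  · exact .inr (.inl hx)
  by_cases hz : z = u
  · rw [mergeInto_of_ne hru hx, hz, mergeInto_self] at h
    exact .inr (.inr (congrArg Subtype.val h))
  · rw [mergeInto_of_ne hru hx, mergeInto_of_ne hru hz] at h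
    exact .inl (congrArg Subtype.val h)

lemma IsSpanningTree.erase_map_mergeInto [Fintype V] [DecidableEq E] {T : Finset E} {g : E}
    (hT : D.IsSpanningTree T) (hg : g ∈ T) (h : D.src g ≠ D.tgt g) :
    (D.map (mergeInto h)).IsSpanningTree (T.erase g) := by
  refine ⟨fun a b => ?_, ?_⟩
  · have hS : ∀ e ∈ (↑T : Set E), e ∈ (↑(T.erase g) : Set E) ∨
        mergeInto h (D.src e) = mergeInto h (D.tgt e) := fun e he => by
      by_cases heg : e = g
      · subst heg
        exact .inr (by rw [mergeInto_of_ne h h, mergeInto_self])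
      · exact .inl (by simp [he, heg])
    have := mem_component_map hS (hT.1 a.1 b.1)
    rwa [mergeInto_val, mergeInto_val] at this
  · have := hT.2
    have := card_erase_add_one hg
    have : Fintype.card {v : V // v ≠ D.tgt g} = Fintype.card V - 1 := by simp
    omega

lemma IsArborescence.insert_of_map_mergeInto {A : Set E} {e₀ : E} (h : D.src e₀ ≠ D.tgt e₀)
    (hA : (D.map (mergeInto h)).IsArborescence A ⟨D.src e₀, h⟩) :
    e₀ ∉ A ∧ D.IsArborescence (insert e₀ A) (D.src e₀) := by
  obtain ⟨hreach, hroot, hin⟩ := isArborescence_iff.1 hA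
  have hA_ne : ∀ e ∈ A, D.tgt e ≠ D.src e₀ ∧ D.tgt e ≠ D.tgt e₀ := fun e he =>
    ⟨fun h' => hroot e he (by simp [map, h', mergeInto_of_ne h h]),
      fun h' => hroot e he (by simp [map, h', mergeInto_self])⟩
  have he₀ : e₀ ∉ A := fun he => (hA_ne e₀ he).2 rfl
  refine ⟨he₀, isArborescence_iff.2 ⟨fun v => ?_, ?_, ?_⟩⟩
  · set R := {x | ∃ p, D.DPath (insert e₀ A) (D.src e₀) x p}
    have hfiber : ∀ x z, mergeInto h x = mergeInto h z → z ∈ R → x ∈ R := fun x z hxz hz => by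
      rcases eq_or_eq_or_eq_of_mergeInto_eq hxz with rfl | rfl | rfl
      · exact hz
      · exact ⟨[e₀], .cons (Set.mem_insert _ _) rfl (.nil _)⟩
      · exact ⟨[], .nil _⟩
    obtain ⟨p, hp⟩ := hreach (mergeInto h v)
    refine (hp.mem_of_closed (R := {w | ∀ x, mergeInto h x = w → x ∈ R}) ?_ ?_) v rfl
    · rintro e he hsrc x hx
      obtain ⟨q, hq⟩ := hsrc (D.src e) rfl
      exact hfiber x (D.tgt e) hx
        ⟨q ++ [e], dPath_concat_iff.2 ⟨hq, Set.mem_insert_of_mem _ he, rfl⟩⟩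
    · exact fun x hx => hfiber x (D.src e₀) (hx.trans (mergeInto_of_ne h h).symm) ⟨[], .nil _⟩
  · rintro e (rfl | he)
    · exact h.symm
    · exact (hA_ne e he).1
  · rintro e (rfl | he) f (rfl | hf) hef
    · rfl
    · exact absurd hef.symm (hA_ne f hf).2
    · exact absurd hef (hA_ne e he).2
    · exact hin he hf (congrArg (mergeInto h) hef)

end Contraction

theorem exists_isArborescence_card_filter_eq [Fintype V] [DecidableEq E] {ι : Type*}
    {C : ι → List E} (hC : ∀ i, D.IsDirCycle (C i)) (hpart : ∀ e, ∃! i, e ∈ C i)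
    {T : Finset E} (hT : D.IsSpanningTree T) (r : V) :
    ∃ A : Finset E, D.IsArborescence ↑A r ∧
      ∀ i, #(A.filter (· ∈ C i)) = #(T.filter (· ∈ C i)) := by
  classical
  induction hn : Fintype.card V using Nat.strong_induction_on generalizing V T with
  | _ n ih =>
  by_cases hV : ∃ v, v ≠ r
  · obtain ⟨v, hv⟩ := hV
    obtain ⟨T₂, hT₂, hin, hcount₂⟩ := hT.exists_forall_tgt_ne hC hpart r
    obtain ⟨e₀, he₀, rfl⟩ := hT₂.1.exists_src_eq hin hv
    have h := hT₂.src_ne_tgt he₀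
    have hlt : Fintype.card {x : V // x ≠ D.tgt e₀} < n := by
      simpa [← hn] using Fintype.card_pos_iff.2 ⟨v⟩
    obtain ⟨A, hA, hcount⟩ := ih _ hlt (fun i => (hC i).map _) (hT₂.erase_map_mergeInto he₀ h)
      ⟨D.src e₀, h⟩ rfl
    obtain ⟨he₀A, hA₀⟩ := hA.insert_of_map_mergeInto h
    refine ⟨insert e₀ A, by rwa [coe_insert], fun i => ?_⟩
    rw [← hcount₂ i, card_filter_insert_of_notMem he₀A, hcount i,
      ← card_filter_insert_of_notMem (notMem_erase e₀ T₂), insert_erase he₀]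
  · push Not at hV
    have hT₀ : T = ∅ := card_eq_zero.1 (by
      have := hT.2
      rw [Fintype.card_eq_one_iff.2 ⟨r, hV⟩] at this
      omega)
    refine ⟨∅, isArborescence_iff.2 ⟨fun v => ⟨[], dPath_nil_iff.2 (hV v).symm⟩, by simp, by simp⟩,
      by simp [hT₀]⟩

end DigraphStr

/-- Given any spanning tree `T` of (the underlying graph of) an alternating
dimap and any root `r`, there is a spanning arborescence rooted at `r` using
the same number of edges from each clockwise face cycle as `T`. -/
theorem stmt5 {V E : Type} [Fintype V] [Fintype E] [DecidableEq E] {k : ℕ}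
    (D : AltDimap V E k) (T : Finset E) (hT : D.toDigraphStr.IsSpanningTree T) (r : V) :
    ∃ A : Finset E, D.toDigraphStr.IsArborescence ↑A r ∧
      ∀ i : Fin k, (A.filter (fun e => e ∈ D.cw i)).card
        = (T.filter (fun e => e ∈ D.cw i)).card :=
  D.toDigraphStr.exists_isArborescence_card_filter_eq D.cw_cycle D.cw_partition hT r
end
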